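/- Let Φ: E → E' be a Lie algebroid morphism over φ, fiberwise bijective, with contragredient map Φ^c: E* → E'* defined by ⟨Φ^c(μ), a⟩ = ⟨μ, Φ_m^{-1}(a)⟩. Then the prolonged map T^Φ(Φ^c): T^E(E*) → T^{E'}(E'*) pulls back the Liouville 1-form and canonical symplectic form: (T^Φ Φ^c)*Θ' = Θ and (T^Φ Φ^c)*Ω' = Ω. -/

import Mathlib

/-!
Pullback of the Liouville `1`-form and the canonical symplectic form on
`T^E(E*)` under the prolongation of the contragredient of a fiberwise bijective
morphism.  `E` is over `Fin n → ℝ`, `E'` over `Fin n' → ℝ`, both of rank `m`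
(fiberwise bijectivity forces equal rank); structure functions `ρ, C` and
`ρ', C'`.  The morphism `Φ` is given by the base map `φ` and the invertible
matrices `Φm x`; the contragredient `Φ^c : E* → E'^*` is
`⟨Φ^c(μ), a⟩ = ⟨μ, Φ_x^{-1} a⟩`, i.e. `(Φ^c μ)_α = Σ_β μ_β (Φm x)⁻¹_{βα}`.
The Liouville section is `⟨Θ,(μ,b,w)⟩ = ⟨μ,b⟩` and `Ω = −dΘ`, computed by the
Koszul formula (`d1`) on constant-coefficient frame sections.  Theorem:
`(T^Φ Φ^c)*Θ' = Θ` and `(T^Φ Φ^c)*Ω' = Ω`.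
-/

open scoped BigOperators

/-- Partial derivative of `f` in the `i`-th coordinate direction. -/
noncomputable def pd {κ : Type*} [Fintype κ] [DecidableEq κ]
    (f : (κ → ℝ) → ℝ) (x : κ → ℝ) (i : κ) : ℝ :=
  fderiv ℝ f x (Pi.single i 1)

/-- Directional derivative on `E*` along the anchor of `z = (b,w)` in `T^E(E*)`. -/
noncomputable def dirDer {n m : ℕ} (ρ : (Fin n → ℝ) → Fin m → Fin n → ℝ)
    (g : (Fin n → ℝ) → (Fin m → ℝ) → ℝ) (x : Fin n → ℝ) (μ : Fin m → ℝ)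
    (z : (Fin m → ℝ) × (Fin m → ℝ)) : ℝ :=
  (∑ i, (∑ α, ρ x α i * z.1 α) * pd (fun x' => g x' μ) x i)
    + ∑ α, z.2 α * pd (fun w => g x w) μ α

/-- Pointwise bracket of constant-coefficient frame sections of `T^E(E*)`. -/
noncomputable def cbr {n m : ℕ} (C : (Fin n → ℝ) → Fin m → Fin m → Fin m → ℝ)
    (x : Fin n → ℝ) (z₁ z₂ : (Fin m → ℝ) × (Fin m → ℝ)) :
    (Fin m → ℝ) × (Fin m → ℝ) :=
  (fun γ => ∑ α, ∑ β, C x γ α β * z₁.1 α * z₂.1 β, 0)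

/-- Koszul differential of a `1`-form on `T^E(E*)`. -/
noncomputable def d1 {n m : ℕ} (ρ : (Fin n → ℝ) → Fin m → Fin n → ℝ)
    (C : (Fin n → ℝ) → Fin m → Fin m → Fin m → ℝ)
    (θ : (Fin n → ℝ) → (Fin m → ℝ) → (Fin m → ℝ) × (Fin m → ℝ) → ℝ)
    (x : Fin n → ℝ) (μ : Fin m → ℝ) (z₁ z₂ : (Fin m → ℝ) × (Fin m → ℝ)) : ℝ :=
  dirDer ρ (fun x' w => θ x' w z₂) x μ z₁
    - dirDer ρ (fun x' w => θ x' w z₁) x μ z₂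
    - θ x μ (cbr C x z₁ z₂)

/-- The Liouville section `⟨Θ,(μ,b,w)⟩ = ⟨μ,b⟩`. -/
noncomputable def liouvilleTheta {n m : ℕ} :
    (Fin n → ℝ) → (Fin m → ℝ) → (Fin m → ℝ) × (Fin m → ℝ) → ℝ :=
  fun _ μ z => ∑ α, μ α * z.1 α

/-- The canonical symplectic section `Ω = −dΘ`. -/
noncomputable def canOmega {n m : ℕ} (ρ : (Fin n → ℝ) → Fin m → Fin n → ℝ)
    (C : (Fin n → ℝ) → Fin m → Fin m → Fin m → ℝ)
    (x : Fin n → ℝ) (μ : Fin m → ℝ) (z₁ z₂ : (Fin m → ℝ) × (Fin m → ℝ)) : ℝ :=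
  - d1 ρ C liouvilleTheta x μ z₁ z₂

/-- The contragredient map on fibers: `(Φ^c μ)_α = Σ_β μ_β (Φm x)⁻¹_{βα}`. -/
noncomputable def contraFib {n m : ℕ} (Φm : (Fin n → ℝ) → Matrix (Fin m) (Fin m) ℝ)
    (x : Fin n → ℝ) (μ : Fin m → ℝ) : Fin m → ℝ :=
  fun α => ∑ β, μ β * (Φm x)⁻¹ β α

/-- Fiber map of the prolonged morphism `T^Φ(Φ^c) : T^E(E*) → T^{E'}(E'^*)`
at the point `(x, μ)`. -/
noncomputable def tphicFib {n m : ℕ} (ρ : (Fin n → ℝ) → Fin m → Fin n → ℝ)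
    (Φm : (Fin n → ℝ) → Matrix (Fin m) (Fin m) ℝ)
    (x : Fin n → ℝ) (μ : Fin m → ℝ) (z : (Fin m → ℝ) × (Fin m → ℝ)) :
    (Fin m → ℝ) × (Fin m → ℝ) :=
  (fun α' => ∑ β, Φm x α' β * z.1 β,
   fun α =>
     (∑ i, pd (fun x' => contraFib Φm x' μ α) x i * (∑ γ, ρ x γ i * z.1 γ))
       + ∑ β, z.2 β * (Φm x)⁻¹ β α)

/-! ### Auxiliary lemmas -/

lemma pd_const {κ : Type*} [Fintype κ] [DecidableEq κ] (c : ℝ) (x : κ → ℝ) (i : κ) :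
    pd (fun _ => c) x i = 0 := by
  simp [pd]

lemma pd_linear {m : ℕ} (c : Fin m → ℝ) (μ : Fin m → ℝ) (β : Fin m) :
    pd (fun w => ∑ α, w α * c α) μ β = c β := by
  have h : HasFDerivAt (fun w : Fin m → ℝ => ∑ α, w α * c α)
      (∑ α, c α • ContinuousLinearMap.proj (R := ℝ) (φ := fun _ : Fin m => ℝ) α) μ := by
    apply HasFDerivAt.fun_sum
    intro α _
    simpa using ((ContinuousLinearMap.proj (R := ℝ) (φ := fun _ : Fin m => ℝ) α).hasFDerivAt
      (x := μ)).mul_const (c α)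
  rw [pd, h.fderiv]
  simp [ContinuousLinearMap.proj, Pi.single_apply]

section swaps
variable {α β γ δ : Type*} [Fintype α] [Fintype β] [Fintype γ] [Fintype δ]

lemma s23 (f : α → β → γ → ℝ) :
    ∑ x, ∑ y, ∑ z, f x y z = ∑ x, ∑ z, ∑ y, f x y z :=
  Finset.sum_congr rfl fun _ _ => Finset.sum_comm

lemma sum3_cycle (f : α → β → γ → ℝ) :
    ∑ x, ∑ y, ∑ z, f x y z = ∑ y, ∑ z, ∑ x, f x y z := by
  rw [Finset.sum_comm, s23]

lemma sum3_rev (f : α → β → γ → ℝ) :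
    ∑ x, ∑ y, ∑ z, f x y z = ∑ z, ∑ y, ∑ x, f x y z := by
  rw [Finset.sum_comm, s23, Finset.sum_comm]

lemma s34 (f : α → β → γ → δ → ℝ) :
    ∑ w, ∑ x, ∑ y, ∑ z, f w x y z = ∑ w, ∑ x, ∑ z, ∑ y, f w x y z :=
  Finset.sum_congr rfl fun _ _ => s23 _

lemma s23' (f : α → β → γ → δ → ℝ) :
    ∑ w, ∑ x, ∑ y, ∑ z, f w x y z = ∑ w, ∑ y, ∑ x, ∑ z, f w x y z :=
  Finset.sum_congr rfl fun _ _ => Finset.sum_comm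

lemma sum4_blockswap (f : α → β → γ → δ → ℝ) :
    ∑ w, ∑ x, ∑ y, ∑ z, f w x y z = ∑ y, ∑ z, ∑ w, ∑ x, f w x y z := by
  rw [s23', Finset.sum_comm, s34, s23']

lemma sum4_cycleback (f : α → β → γ → δ → ℝ) :
    ∑ w, ∑ x, ∑ y, ∑ z, f w x y z = ∑ z, ∑ w, ∑ x, ∑ y, f w x y z := by
  rw [s34, s23', Finset.sum_comm]

lemma sum4_swap14 (f : α → β → γ → δ → ℝ) :
    ∑ w, ∑ x, ∑ y, ∑ z, f w x y z = ∑ z, ∑ x, ∑ y, ∑ w, f w x y z := by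
  rw [s34, s23', Finset.sum_comm, s23', s34]

end swaps

/-- Evaluation of the canonical symplectic section on constant frame sections. -/
lemma canOmega_eval {n m : ℕ} (ρ : (Fin n → ℝ) → Fin m → Fin n → ℝ)
    (C : (Fin n → ℝ) → Fin m → Fin m → Fin m → ℝ)
    (x : Fin n → ℝ) (μ : Fin m → ℝ) (z₁ z₂ : (Fin m → ℝ) × (Fin m → ℝ)) :
    canOmega ρ C x μ z₁ z₂
      = (∑ α, z₂.2 α * z₁.1 α) - (∑ α, z₁.2 α * z₂.1 α)
        + ∑ γ, μ γ * ∑ a, ∑ b, C x γ a b * z₁.1 a * z₂.1 b := by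
  unfold canOmega d1 dirDer cbr liouvilleTheta
  simp only [pd_const, pd_linear, mul_zero, zero_mul, Finset.sum_const_zero, zero_add, add_zero]
  ring

/-- `hB`: contraction of the inverse part against the direct image. -/
lemma hB_aux {m : ℕ} (A I : Matrix (Fin m) (Fin m) ℝ)
    (hIA : ∀ β γ, ∑ α, I β α * A α γ = if β = γ then (1:ℝ) else 0)
    (w b : Fin m → ℝ) :
    ∑ α, (∑ β, w β * I β α) * (∑ γ, A α γ * b γ) = ∑ β, w β * b β := by
  have h1 : ∀ α, (∑ β, w β * I β α) * (∑ γ, A α γ * b γ)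
      = ∑ β, ∑ γ, (w β * b γ) * (I β α * A α γ) := by
    intro α
    rw [Finset.sum_mul]
    refine Finset.sum_congr rfl fun β _ => ?_
    rw [Finset.mul_sum]
    exact Finset.sum_congr rfl fun γ _ => by ring
  calc ∑ α, (∑ β, w β * I β α) * (∑ γ, A α γ * b γ)
      = ∑ β, ∑ γ, (w β * b γ) * (∑ α, I β α * A α γ) := by
        simp only [h1]
        rw [Finset.sum_comm]
        refine Finset.sum_congr rfl fun β _ => ?_
        rw [Finset.sum_comm]
        refine Finset.sum_congr rfl fun γ _ => ?_
        rw [Finset.mul_sum]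
    _ = ∑ β, w β * b β := by
        simp only [hIA, mul_ite, mul_one, mul_zero]
        refine Finset.sum_congr rfl fun β _ => ?_
        simp

/-- `hA`: contraction of the derivative part against the direct image. -/
lemma hA_aux {n m : ℕ} (A : Matrix (Fin m) (Fin m) ℝ) (ν : Fin m → ℝ)
    (P : Fin m → Fin n → ℝ) (Q : Fin m → Fin m → Fin n → ℝ)
    (hkey : ∀ i γ, ∑ α, P α i * A α γ = - ∑ α, ν α * Q α γ i)
    (R : Fin n → ℝ) (b : Fin m → ℝ) :
    ∑ α, (∑ i, P α i * R i) * (∑ γ, A α γ * b γ)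
      = - ∑ α, ν α * ∑ d, ∑ i, Q α d i * R i * b d := by
  have h1 : ∀ α, (∑ i, P α i * R i) * (∑ γ, A α γ * b γ)
      = ∑ i, ∑ d, (R i * b d) * (P α i * A α d) := by
    intro α
    rw [Finset.sum_mul]
    refine Finset.sum_congr rfl fun i _ => ?_
    rw [Finset.mul_sum]
    exact Finset.sum_congr rfl fun d _ => by ring
  calc ∑ α, (∑ i, P α i * R i) * (∑ γ, A α γ * b γ)
      = ∑ i, ∑ d, (R i * b d) * (∑ α, P α i * A α d) := by
        simp only [h1]
        rw [Finset.sum_comm]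
        refine Finset.sum_congr rfl fun i _ => ?_
        rw [Finset.sum_comm]
        refine Finset.sum_congr rfl fun d _ => ?_
        rw [Finset.mul_sum]
    _ = ∑ i, ∑ d, (R i * b d) * (- ∑ α, ν α * Q α d i) := by
        simp only [hkey]
    _ = - ∑ α, ν α * ∑ d, ∑ i, Q α d i * R i * b d := by
        simp only [Finset.mul_sum, ← Finset.sum_neg_distrib, neg_mul, mul_neg]
        rw [sum3_rev]
        refine Finset.sum_congr rfl fun α _ => ?_
        refine Finset.sum_congr rfl fun d _ => ?_
        refine Finset.sum_congr rfl fun i _ => by ring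

lemma hX_aux {n m : ℕ} (Q : Fin m → Fin m → Fin n → ℝ) (ρx : Fin m → Fin n → ℝ)
    (u v : Fin m → ℝ) (α : Fin m) :
    ∑ μ', ∑ ν', (u μ' * v ν') * (∑ i, ρx μ' i * Q α ν' i)
      = ∑ d, ∑ i, Q α d i * (∑ γ, ρx γ i * u γ) * v d := by
  simp only [Finset.mul_sum, Finset.sum_mul]
  rw [sum3_cycle]
  refine Finset.sum_congr rfl fun d _ => Finset.sum_congr rfl fun i _ =>
    Finset.sum_congr rfl fun γ _ => by ring

lemma hW_aux {m : ℕ} (A : Matrix (Fin m) (Fin m) ℝ)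
    (C2 : Fin m → Fin m → ℝ) (b₁ b₂ : Fin m → ℝ) :
    ∑ μ', ∑ ν', (b₁ μ' * b₂ ν') * (∑ a, ∑ b, C2 a b * A a μ' * A b ν')
      = ∑ a, ∑ b, C2 a b * (∑ β, A a β * b₁ β) * (∑ β, A b β * b₂ β) := by
  simp only [Finset.mul_sum, Finset.sum_mul]
  rw [sum4_blockswap, s34]
  refine Finset.sum_congr rfl fun a _ => Finset.sum_congr rfl fun b _ =>
    Finset.sum_congr rfl fun μ' _ => Finset.sum_congr rfl fun ν' _ => by ring

/-- Full algebraic core. -/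
lemma alg_core {n m : ℕ} (A I : Matrix (Fin m) (Fin m) ℝ) (ν μv : Fin m → ℝ)
    (P : Fin m → Fin n → ℝ) (Q : Fin m → Fin m → Fin n → ℝ)
    (ρx : Fin m → Fin n → ℝ) (Cm C2 : Fin m → Fin m → Fin m → ℝ)
    (b₁ b₂ w₁ w₂ : Fin m → ℝ)
    (hIA : ∀ β γ, ∑ α, I β α * A α γ = if β = γ then (1:ℝ) else 0)
    (hkey : ∀ i γ, ∑ α, P α i * A α γ = - ∑ α, ν α * Q α γ i)
    (hν : ∀ γ, ∑ α, ν α * A α γ = μv γ)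
    (hm : ∀ α' μ' ν', (∑ i, ρx μ' i * Q α' ν' i) - (∑ i, ρx ν' i * Q α' μ' i)
        + (∑ β, ∑ γ, C2 α' β γ * A β μ' * A γ ν') = ∑ γ, A α' γ * Cm γ μ' ν') :
    (∑ α, (∑ i, P α i * (∑ γ, ρx γ i * b₂ γ) + ∑ β, w₂ β * I β α) * (∑ γ, A α γ * b₁ γ))
      - (∑ α, (∑ i, P α i * (∑ γ, ρx γ i * b₁ γ) + ∑ β, w₁ β * I β α) * (∑ γ, A α γ * b₂ γ))
      + (∑ γ, ν γ * ∑ a, ∑ b, C2 γ a b * (∑ β, A a β * b₁ β) * (∑ β, A b β * b₂ β))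
    = (∑ α, w₂ α * b₁ α) - (∑ α, w₁ α * b₂ α)
        + ∑ γ, μv γ * ∑ a, ∑ b, Cm γ a b * b₁ a * b₂ b := by
  -- split the two big sums
  have split : ∀ (R : Fin n → ℝ) (w b : Fin m → ℝ),
      ∑ α, (∑ i, P α i * R i + ∑ β, w β * I β α) * (∑ γ, A α γ * b γ)
        = (∑ α, (∑ i, P α i * R i) * (∑ γ, A α γ * b γ))
          + ∑ α, (∑ β, w β * I β α) * (∑ γ, A α γ * b γ) := by
    intro R w b
    rw [← Finset.sum_add_distrib]
    exact Finset.sum_congr rfl fun α _ => by ring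
  rw [split, split, hB_aux A I hIA w₂ b₁, hB_aux A I hIA w₁ b₂,
    hA_aux A ν P Q hkey _ b₁, hA_aux A ν P Q hkey _ b₂]
  -- now prove the hmorph contraction identity
  have key : ∀ α, (∑ μ', ∑ ν', (b₁ μ' * b₂ ν') *
        ((∑ i, ρx μ' i * Q α ν' i) - (∑ i, ρx ν' i * Q α μ' i)
          + ∑ β, ∑ γ, C2 α β γ * A β μ' * A γ ν'))
      = ∑ μ', ∑ ν', (b₁ μ' * b₂ ν') * (∑ γ, A α γ * Cm γ μ' ν') :=
    fun α => Finset.sum_congr rfl fun μ' _ => Finset.sum_congr rfl fun ν' _ => by rw [hm]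
  have hY : ∀ α, ∑ μ', ∑ ν', (b₁ μ' * b₂ ν') * (∑ i, ρx ν' i * Q α μ' i)
      = ∑ d, ∑ i, Q α d i * (∑ γ, ρx γ i * b₂ γ) * b₁ d := by
    intro α
    rw [Finset.sum_comm]
    calc ∑ ν', ∑ μ', (b₁ μ' * b₂ ν') * (∑ i, ρx ν' i * Q α μ' i)
        = ∑ ν', ∑ μ', (b₂ ν' * b₁ μ') * (∑ i, ρx ν' i * Q α μ' i) := by
          exact Finset.sum_congr rfl fun _ _ => Finset.sum_congr rfl fun _ _ => by ring
      _ = ∑ d, ∑ i, Q α d i * (∑ γ, ρx γ i * b₂ γ) * b₁ d := hX_aux Q ρx b₂ b₁ α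
  have keysplit : ∀ α, (∑ μ', ∑ ν', (b₁ μ' * b₂ ν') *
        ((∑ i, ρx μ' i * Q α ν' i) - (∑ i, ρx ν' i * Q α μ' i)
          + ∑ β, ∑ γ, C2 α β γ * A β μ' * A γ ν'))
      = (∑ d, ∑ i, Q α d i * (∑ γ, ρx γ i * b₁ γ) * b₂ d)
        - (∑ d, ∑ i, Q α d i * (∑ γ, ρx γ i * b₂ γ) * b₁ d)
        + ∑ a, ∑ b, C2 α a b * (∑ β, A a β * b₁ β) * (∑ β, A b β * b₂ β) := by
    intro α
    rw [← hX_aux Q ρx b₁ b₂ α, ← hY α, ← hW_aux A (fun a b => C2 α a b) b₁ b₂]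
    simp only [mul_sub, mul_add, Finset.sum_add_distrib, Finset.sum_sub_distrib]
  have hR : ∑ α, ν α * (∑ μ', ∑ ν', (b₁ μ' * b₂ ν') * (∑ γ, A α γ * Cm γ μ' ν'))
      = ∑ γ, μv γ * ∑ a, ∑ b, Cm γ a b * b₁ a * b₂ b := by
    simp only [← hν, Finset.mul_sum, Finset.sum_mul]
    rw [sum4_swap14]
    refine Finset.sum_congr rfl fun γ _ => Finset.sum_congr rfl fun α _ =>
      Finset.sum_congr rfl fun a _ => Finset.sum_congr rfl fun b _ => by ring
  have hE : (∑ α, ν α * ((∑ d, ∑ i, Q α d i * (∑ γ, ρx γ i * b₁ γ) * b₂ d)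
        - (∑ d, ∑ i, Q α d i * (∑ γ, ρx γ i * b₂ γ) * b₁ d)
        + ∑ a, ∑ b, C2 α a b * (∑ β, A a β * b₁ β) * (∑ β, A b β * b₂ β)))
      = ∑ γ, μv γ * ∑ a, ∑ b, Cm γ a b * b₁ a * b₂ b := by
    rw [← hR]
    exact Finset.sum_congr rfl fun α _ => by rw [← key α, keysplit α]
  have hEsplit : ∑ α, ν α * ((∑ d, ∑ i, Q α d i * (∑ γ, ρx γ i * b₁ γ) * b₂ d)
        - (∑ d, ∑ i, Q α d i * (∑ γ, ρx γ i * b₂ γ) * b₁ d)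
        + ∑ a, ∑ b, C2 α a b * (∑ β, A a β * b₁ β) * (∑ β, A b β * b₂ β))
      = (∑ α, ν α * ∑ d, ∑ i, Q α d i * (∑ γ, ρx γ i * b₁ γ) * b₂ d)
        - (∑ α, ν α * ∑ d, ∑ i, Q α d i * (∑ γ, ρx γ i * b₂ γ) * b₁ d)
        + ∑ α, ν α * ∑ a, ∑ b, C2 α a b * (∑ β, A a β * b₁ β) * (∑ β, A b β * b₂ β) := by
    simp only [mul_sub, mul_add, Finset.sum_add_distrib, Finset.sum_sub_distrib]
  rw [hEsplit] at hE
  linarith [hE]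

lemma diffAt_det {n m : ℕ} (M : (Fin n → ℝ) → Matrix (Fin m) (Fin m) ℝ)
    (x : Fin n → ℝ) (h : ∀ α β, DifferentiableAt ℝ (fun x' => M x' α β) x) :
    DifferentiableAt ℝ (fun x' => (M x').det) x := by
  simp only [Matrix.det_apply']
  apply DifferentiableAt.fun_sum
  intro σ _
  apply DifferentiableAt.const_mul
  exact (HasFDerivAt.finset_prod (fun j _ => (h (σ j) j).hasFDerivAt)).differentiableAt

lemma diffAt_inv_entry {n m : ℕ} (Φm : (Fin n → ℝ) → Matrix (Fin m) (Fin m) ℝ)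
    (hΦm : ∀ α β y, DifferentiableAt ℝ (fun x' => Φm x' α β) y)
    (hinv : ∀ x, IsUnit (Φm x).det) (x : Fin n → ℝ) (β α : Fin m) :
    DifferentiableAt ℝ (fun x' => (Φm x')⁻¹ β α) x := by
  have he : (fun x' => (Φm x')⁻¹ β α)
      = fun x' => ((Φm x').det)⁻¹ * ((Φm x').updateRow α (Pi.single β 1)).det := by
    funext x'
    rw [Matrix.inv_def]
    simp [Matrix.smul_apply, Ring.inverse_eq_inv', Matrix.adjugate_apply]
  rw [he]
  have hdet : DifferentiableAt ℝ (fun x' => (Φm x').det) x :=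
    diffAt_det _ _ (fun a b => hΦm a b x)
  have hne : (Φm x).det ≠ 0 := (hinv x).ne_zero
  refine (hdet.inv hne).mul ?_
  apply diffAt_det
  intro a b
  by_cases hab : a = α
  · simp only [Matrix.updateRow_apply, hab, if_true]
    exact differentiableAt_const _
  · simp only [Matrix.updateRow_apply, hab, if_false]
    exact hΦm a b x

lemma diffAt_contra {n m : ℕ} (Φm : (Fin n → ℝ) → Matrix (Fin m) (Fin m) ℝ)
    (hΦm : ∀ α β y, DifferentiableAt ℝ (fun x' => Φm x' α β) y)
    (hinv : ∀ x, IsUnit (Φm x).det) (x : Fin n → ℝ) (μ : Fin m → ℝ) (α : Fin m) :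
    DifferentiableAt ℝ (fun x' => contraFib Φm x' μ α) x := by
  unfold contraFib
  apply DifferentiableAt.fun_sum
  intro β _
  exact (diffAt_inv_entry Φm hΦm hinv x β α).const_mul _

lemma contra_contract {n m : ℕ} (Φm : (Fin n → ℝ) → Matrix (Fin m) (Fin m) ℝ)
    (hinv : ∀ x, IsUnit (Φm x).det) (μ : Fin m → ℝ) (x : Fin n → ℝ) (γ : Fin m) :
    ∑ α, contraFib Φm x μ α * Φm x α γ = μ γ := by
  unfold contraFib
  have h1 : ∀ α, (∑ β, μ β * (Φm x)⁻¹ β α) * Φm x α γ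
      = ∑ β, μ β * ((Φm x)⁻¹ β α * Φm x α γ) := by
    intro α; rw [Finset.sum_mul]; exact Finset.sum_congr rfl fun β _ => by ring
  simp only [h1]
  rw [Finset.sum_comm]
  have h2 : ∀ β, ∑ α, μ β * ((Φm x)⁻¹ β α * Φm x α γ)
      = μ β * ((Φm x)⁻¹ * Φm x) β γ := by
    intro β
    rw [Matrix.mul_apply, Finset.mul_sum]
  simp only [h2, Matrix.nonsing_inv_mul _ (hinv x), Matrix.one_apply]
  simp [Finset.sum_ite_eq']

lemma keylem {n m : ℕ} (Φm : (Fin n → ℝ) → Matrix (Fin m) (Fin m) ℝ)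
    (hΦm : ∀ α β, ContDiff ℝ (⊤ : ℕ∞) (fun x => Φm x α β))
    (hinv : ∀ x, IsUnit (Φm x).det) (μ : Fin m → ℝ) (x : Fin n → ℝ)
    (i : Fin n) (γ : Fin m) :
    ∑ α, pd (fun x' => contraFib Φm x' μ α) x i * Φm x α γ
      = - ∑ α, contraFib Φm x μ α * pd (fun x' => Φm x' α γ) x i := by
  have hΦd : ∀ α β y, DifferentiableAt ℝ (fun x' => Φm x' α β) y :=
    fun α β y => ((hΦm α β).differentiable (by simp)).differentiableAt
  have hcd : ∀ α, DifferentiableAt ℝ (fun x' => contraFib Φm x' μ α) x :=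
    fun α => diffAt_contra Φm hΦd hinv x μ α
  have hconst : (fun x' => ∑ α, contraFib Φm x' μ α * Φm x' α γ) = fun _ => μ γ := by
    funext x'
    exact contra_contract Φm hinv μ x' γ
  have h0 : fderiv ℝ (fun x' => ∑ α, contraFib Φm x' μ α * Φm x' α γ) x = 0 := by
    rw [hconst]; exact fderiv_const_apply _
  have hsum : fderiv ℝ (fun x' => ∑ α, contraFib Φm x' μ α * Φm x' α γ) x
      = ∑ α, (contraFib Φm x μ α • fderiv ℝ (fun x' => Φm x' α γ) x
          + Φm x α γ • fderiv ℝ (fun x' => contraFib Φm x' μ α) x) := by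
    rw [fderiv_fun_sum (A := fun α x' => contraFib Φm x' μ α * Φm x' α γ) (fun α _ => (hcd α).mul (hΦd α γ x))]
    exact Finset.sum_congr rfl fun α _ => fderiv_fun_mul (hcd α) (hΦd α γ x)
  have := congrArg (fun (L : (Fin n → ℝ) →L[ℝ] ℝ) => L (Pi.single i 1)) (h0.symm.trans hsum)
  simp only [ContinuousLinearMap.zero_apply, ContinuousLinearMap.sum_apply,
    ContinuousLinearMap.add_apply, ContinuousLinearMap.smul_apply, smul_eq_mul,
    Finset.sum_add_distrib] at this
  have h2 : ∑ α, pd (fun x' => contraFib Φm x' μ α) x i * Φm x α γ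
      = ∑ α, Φm x α γ * fderiv ℝ (fun x' => contraFib Φm x' μ α) x (Pi.single i 1) := by
    exact Finset.sum_congr rfl fun α _ => by rw [pd]; ring
  have h3 : ∑ α, contraFib Φm x μ α * pd (fun x' => Φm x' α γ) x i
      = ∑ α, contraFib Φm x μ α * fderiv ℝ (fun x' => Φm x' α γ) x (Pi.single i 1) := rfl
  rw [h2, h3]
  linarith [this]


theorem contragredient_pullback_liouville_and_symplectic {n n' m : ℕ}
    (ρ : (Fin n → ℝ) → Fin m → Fin n → ℝ)
    (C : (Fin n → ℝ) → Fin m → Fin m → Fin m → ℝ)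
    (ρ' : (Fin n' → ℝ) → Fin m → Fin n' → ℝ)
    (C' : (Fin n' → ℝ) → Fin m → Fin m → Fin m → ℝ)
    (φ : (Fin n → ℝ) → Fin n' → ℝ)
    (Φm : (Fin n → ℝ) → Matrix (Fin m) (Fin m) ℝ)
    (hρ : ∀ α i, ContDiff ℝ (⊤ : ℕ∞) (fun x => ρ x α i))
    (hρ' : ∀ α k, ContDiff ℝ (⊤ : ℕ∞) (fun x' => ρ' x' α k))
    (hC : ∀ γ α β, ContDiff ℝ (⊤ : ℕ∞) (fun x => C x γ α β))
    (hC' : ∀ γ α β, ContDiff ℝ (⊤ : ℕ∞) (fun x' => C' x' γ α β))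
    (hφ : ContDiff ℝ (⊤ : ℕ∞) φ)
    (hΦm : ∀ α' β, ContDiff ℝ (⊤ : ℕ∞) (fun x => Φm x α' β))
    -- Φ is fiberwise bijective
    (hinv : ∀ x, IsUnit (Φm x).det)
    -- Φ is admissible
    (hadm : ∀ (x : Fin n → ℝ) (α : Fin m) (k : Fin n'),
      ∑ i, ρ x α i * pd (fun x' => φ x' k) x i = ∑ β, ρ' (φ x) β k * Φm x β α)
    -- Φ is a morphism of Lie algebroids
    (hmorph : ∀ (x : Fin n → ℝ) (α' : Fin m) (μ ν : Fin m),
      (∑ i, ρ x μ i * pd (fun x' => Φm x' α' ν) x i)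
        - (∑ i, ρ x ν i * pd (fun x' => Φm x' α' μ) x i)
        + (∑ β, ∑ γ, C' (φ x) α' β γ * Φm x β μ * Φm x γ ν)
        = ∑ γ, Φm x α' γ * C x γ μ ν) :
    -- (T^Φ Φ^c)* Θ' = Θ
    (∀ (x : Fin n → ℝ) (μ : Fin m → ℝ) (z : (Fin m → ℝ) × (Fin m → ℝ)),
      liouvilleTheta (φ x) (contraFib Φm x μ) (tphicFib ρ Φm x μ z)
        = liouvilleTheta x μ z) ∧
    -- (T^Φ Φ^c)* Ω' = Ω
    (∀ (x : Fin n → ℝ) (μ : Fin m → ℝ) (z₁ z₂ : (Fin m → ℝ) × (Fin m → ℝ)),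
      canOmega ρ' C' (φ x) (contraFib Φm x μ)
          (tphicFib ρ Φm x μ z₁) (tphicFib ρ Φm x μ z₂)
        = canOmega ρ C x μ z₁ z₂) := by
  have hIA : ∀ (x : Fin n → ℝ) (β γ : Fin m),
      ∑ α, (Φm x)⁻¹ β α * Φm x α γ = if β = γ then (1:ℝ) else 0 := by
    intro x β γ
    have := Matrix.nonsing_inv_mul (Φm x) (hinv x)
    calc ∑ α, (Φm x)⁻¹ β α * Φm x α γ = ((Φm x)⁻¹ * Φm x) β γ :=
          (Matrix.mul_apply).symm
      _ = (1 : Matrix (Fin m) (Fin m) ℝ) β γ := by rw [this]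
      _ = if β = γ then (1:ℝ) else 0 := Matrix.one_apply
  constructor
  · intro x μ z
    show ∑ α, contraFib Φm x μ α * (∑ β, Φm x α β * z.1 β) = ∑ α, μ α * z.1 α
    calc ∑ α, contraFib Φm x μ α * (∑ β, Φm x α β * z.1 β)
        = ∑ α, (∑ β, μ β * (Φm x)⁻¹ β α) * (∑ γ, Φm x α γ * z.1 γ) := rfl
      _ = ∑ β, μ β * z.1 β := hB_aux (Φm x) (Φm x)⁻¹ (hIA x) μ z.1
  · intro x μ z₁ z₂
    rw [canOmega_eval, canOmega_eval]
    exact alg_core (Φm x) (Φm x)⁻¹ (contraFib Φm x μ) μ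
      (fun α i => pd (fun x' => contraFib Φm x' μ α) x i)
      (fun α' γ i => pd (fun x' => Φm x' α' γ) x i)
      (fun γ i => ρ x γ i) (C x) (C' (φ x)) z₁.1 z₂.1 z₁.2 z₂.2
      (hIA x)
      (fun i γ => keylem Φm hΦm hinv μ x i γ)
      (fun γ => contra_contract Φm hinv μ x γ)
      (fun α' μ' ν' => hmorph x α' μ' ν')
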